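/- arXiv:1807.11153 — 3 statements merged into one kernel-verified Lean document; each statement's English description precedes it below -/
import Mathlib

section
/- Let V be a finite-dimensional real vector space equipped with a nondegenerate symmetric bilinear form, let C ⊆ V be a coisotropic subspace (i.e. C^⊥ ⊆ C), and let F₁ ⊆ V be a subspace complementary to C (i.e. C ⊕ F₁ = V). Then there exists an isotropic subspace F ⊆ V (i.e. F ⊆ F^⊥) that is also complementary to C. -/
/-- If `C` is a coisotropic subspace of a finite-dimensional real vector space `V` with a
nondegenerate symmetric bilinear form, and `F₁` is a complement to `C`, then there exists an
isotropic subspace `F` complementary to `C`. -/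
theorem stmt0 {V : Type*} [AddCommGroup V] [Module ℝ V] [FiniteDimensional ℝ V]
    (B : LinearMap.BilinForm ℝ V) (hsymm : B.IsSymm) (hnd : B.Nondegenerate)
    (C F₁ : Submodule ℝ V)
    (hC : B.orthogonal C ≤ C)
    (hF₁ : IsCompl C F₁) :
    ∃ F : Submodule ℝ V, F ≤ B.orthogonal F ∧ IsCompl C F := by
  classical
  set K : Submodule ℝ V := B.orthogonal C with hKdef
  -- the pairing `K → Dual F₁`, `u ↦ B u ·`
  let p : K →ₗ[ℝ] Module.Dual ℝ F₁ :=
    (F₁.subtype.dualMap).comp (B.domRestrict K)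
  have hp_apply : ∀ (u : K) (x : F₁), p u x = B u.1 x.1 := fun u x => rfl
  -- injectivity of p
  have hp_inj : Function.Injective p := by
    rw [← LinearMap.ker_eq_bot]
    ext u
    simp only [LinearMap.mem_ker, Submodule.mem_bot]
    constructor
    · intro hu
      have hKu : ∀ c ∈ C, B c u.1 = 0 := fun c hc => u.2 c hc
      have : u.1 = 0 := by
        apply hnd.1
        intro v
        have hv : v ∈ C ⊔ F₁ := by rw [hF₁.sup_eq_top]; trivial
        obtain ⟨c, hc, x, hx, rfl⟩ := Submodule.mem_sup.mp hv
        have h1 : B u.1 c = 0 := by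
          have := hKu c hc
          rw [← hsymm.eq]; simpa using this
        have h2 : B u.1 x = 0 := by
          have := congrFun (congrArg DFunLike.coe hu) ⟨x, hx⟩
          simpa [hp_apply] using this
        rw [map_add, h1, h2, add_zero]
      exact Subtype.ext this
    · rintro rfl; simp
  -- dimension count
  have hdim : Module.finrank ℝ K = Module.finrank ℝ (Module.Dual ℝ F₁) := by
    rw [Subspace.dual_finrank_eq]
    rw [hKdef, LinearMap.BilinForm.finrank_orthogonal hnd]
    have := Submodule.finrank_add_eq_of_isCompl hF₁
    omega
  let e : K ≃ₗ[ℝ] Module.Dual ℝ F₁ := LinearMap.linearEquivOfInjective p hp_inj hdim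
  have he : ∀ u : K, e u = p u := fun u => LinearMap.linearEquivOfInjective_apply _ _ _
  -- the correction map
  let q : F₁ →ₗ[ℝ] Module.Dual ℝ F₁ := (-(2⁻¹ : ℝ)) • (B.restrict F₁)
  let T : F₁ →ₗ[ℝ] K := e.symm.toLinearMap.comp q
  have hT : ∀ (x y : F₁), B (T x).1 y.1 = -(2⁻¹ : ℝ) * B x.1 y.1 := by
    intro x y
    have : p (T x) y = q x y := by
      rw [← he]
      show e (e.symm (q x)) y = q x y
      rw [e.apply_symm_apply]
    simpa [hp_apply, q, LinearMap.BilinForm.restrict_apply] using this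
  have hTC : ∀ x : F₁, (T x).1 ∈ C := fun x => hC (T x).2
  have hTK : ∀ (x y : F₁), B (T x).1 (T y).1 = 0 := fun x y =>
    (T y).2 (T x).1 (hTC x)
  -- the graph map and the subspace F
  let f : F₁ →ₗ[ℝ] V := F₁.subtype + K.subtype.comp T
  have hf : ∀ x : F₁, f x = x.1 + (T x).1 := fun x => rfl
  refine ⟨LinearMap.range f, ?_, ?_, ?_⟩
  · -- isotropic
    rintro v ⟨a, rfl⟩
    rw [LinearMap.BilinForm.mem_orthogonal_iff]
    rintro w ⟨b, rfl⟩
    show B (f b) (f a) = 0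
    have hba : B b.1 (T a).1 = -(2⁻¹ : ℝ) * B b.1 a.1 := by
      rw [show B b.1 (T a).1 = B (T a).1 b.1 from (hsymm.eq _ _).symm, hT,
        show B a.1 b.1 = B b.1 a.1 from hsymm.eq _ _]
    rw [hf, hf]
    simp only [map_add, LinearMap.add_apply, hT b a, hba, hTK b a]
    ring
  · -- disjoint
    rw [Submodule.disjoint_def]
    rintro v hvC ⟨a, rfl⟩
    have ha : a.1 ∈ C := by
      have : a.1 = f a - (T a).1 := by rw [hf]; abel
      rw [this]
      exact Submodule.sub_mem C hvC (hTC a)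
    have : a.1 ∈ C ⊓ F₁ := ⟨ha, a.2⟩
    rw [hF₁.inf_eq_bot] at this
    have ha0 : a = 0 := Subtype.ext this
    rw [ha0, map_zero]
  · -- codisjoint
    rw [codisjoint_iff, eq_top_iff]
    intro v _
    have hv : v ∈ C ⊔ F₁ := by rw [hF₁.sup_eq_top]; trivial
    obtain ⟨c, hc, x, hx, rfl⟩ := Submodule.mem_sup.mp hv
    refine Submodule.mem_sup.mpr ⟨c - (T ⟨x, hx⟩).1,
      Submodule.sub_mem C hc (hTC _), f ⟨x, hx⟩, ⟨⟨x, hx⟩, rfl⟩, ?_⟩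
    rw [hf]
    abel
end

section
/- Let V be a finite-dimensional real vector space with a nondegenerate symmetric bilinear form, and let C ⊆ V be a coisotropic subspace with a complementary subspace F₁. Then the subspace V' = C^⊥ + F₁ satisfies V' ∩ (V')^⊥ = 0, i.e. the bilinear form restricts to a nondegenerate form on V'. -/
/-- For a coisotropic subspace `C` of a finite-dimensional real vector space with nondegenerate
symmetric bilinear form, and a complement `F₁` of `C`, the subspace `V' = C^⊥ + F₁` satisfies
`V' ∩ (V')^⊥ = 0`, i.e. the form restricts nondegenerately to `V'`. -/
theorem stmt1 {V : Type*} [AddCommGroup V] [Module ℝ V] [FiniteDimensional ℝ V]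
    (B : LinearMap.BilinForm ℝ V) (hsymm : B.IsSymm) (hnd : B.Nondegenerate)
    (C F₁ : Submodule ℝ V)
    (hC : B.orthogonal C ≤ C)
    (hF₁ : IsCompl C F₁) :
    (B.orthogonal C ⊔ F₁) ⊓ B.orthogonal (B.orthogonal C ⊔ F₁) = ⊥ := by
  rw [Submodule.eq_bot_iff]
  rintro v ⟨hv1, hv2⟩
  -- v is orthogonal to C^⊥, hence v ∈ (C^⊥)^⊥ = C
  have hvC : v ∈ C := by
    rw [← LinearMap.BilinForm.orthogonal_orthogonal hnd hsymm.isRefl C]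
    exact LinearMap.BilinForm.orthogonal_le le_sup_left hv2
  -- decompose v = x + f, x ∈ C^⊥, f ∈ F₁
  obtain ⟨x, hx, f, hf, rfl⟩ := Submodule.mem_sup.mp hv1
  have hfC : f ∈ C := by
    have : (x + f) - x ∈ C := Submodule.sub_mem _ hvC (hC hx)
    simpa using this
  have hf0 : f = 0 := by
    have := hF₁.inf_eq_bot ▸ (Submodule.mem_inf.mpr ⟨hfC, hf⟩)
    simpa using this
  subst hf0
  -- now v = x ∈ C^⊥, and v ⊥ F₁, so v ⊥ (C ⊔ F₁) = ⊤
  simp only [add_zero] at hv2 ⊢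
  apply hnd.1
  intro w
  have hw : w ∈ C ⊔ F₁ := hF₁.sup_eq_top ▸ Submodule.mem_top
  obtain ⟨c, hc, g, hg, rfl⟩ := Submodule.mem_sup.mp hw
  have h1 : B c x = 0 := hx c hc
  have h2 : B g x = 0 := hv2 g (Submodule.mem_sup_right hg)
  have : B (c + g) x = 0 := by rw [map_add, LinearMap.add_apply, h1, h2, add_zero]
  rw [hsymm.eq (c + g) x] at this
  exact this
end

section
/- Let V be a finite-dimensional real vector space with a nondegenerate symmetric bilinear form, C ⊆ V coisotropic, and F₁ complementary to C. In the subspace V' = C^⊥ ⊕ F₁ with the restricted (nondegenerate) form, C' = C^⊥ is a Lagrangian subspace of V', i.e. C' equals its own orthogonal complement within V'. -/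
/-- With `C` coisotropic and `F₁` a complement to `C` in a finite-dimensional real vector space
with nondegenerate symmetric bilinear form, the subspace `C' = C^⊥` is Lagrangian in
`V' = C^⊥ + F₁`: it equals its own orthogonal complement computed within `V'`. -/
theorem stmt2 {V : Type*} [AddCommGroup V] [Module ℝ V] [FiniteDimensional ℝ V]
    (B : LinearMap.BilinForm ℝ V) (hsymm : B.IsSymm) (hnd : B.Nondegenerate)
    (C F₁ : Submodule ℝ V)
    (hC : B.orthogonal C ≤ C)
    (hF₁ : IsCompl C F₁) :
    B.orthogonal C = (B.orthogonal C ⊔ F₁) ⊓ B.orthogonal (B.orthogonal C) := by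
  rw [LinearMap.BilinForm.orthogonal_orthogonal hnd hsymm.isRefl]
  apply le_antisymm
  · exact le_inf le_sup_left hC
  · rintro x ⟨hx1, hxC⟩
    rcases Submodule.mem_sup.mp hx1 with ⟨a, ha, f, hf, rfl⟩
    have hfC : f ∈ C := by
      have : a ∈ C := hC ha
      have := C.sub_mem hxC this
      simpa using this
    have : f = 0 := by
      have := hF₁.inf_eq_bot
      have : f ∈ C ⊓ F₁ := ⟨hfC, hf⟩
      simpa [hF₁.inf_eq_bot] using this
    simpa [this] using ha
end
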